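/- (One-step decrease, regime p8.) Let f1 ∈ F_{μ1,L1} and f2 ∈ F_{μ2,L2} with L2 > μ2 > L1 > 0, μ1 < L1, μ1 + μ2 > 0, and μ1/μ2 + 1 + μ1/L1 ≥ 0 (i.e., μ1·(1/μ1 + 1/μ2 + 1/L1) ≥ 0). Let F := f1 − f2 and consider a DCA step from x to x⁺ with g2 ∈ ∂f2(x), g1⁺ ∈ ∂f1(x⁺), g1⁺ = g2, and let g1 ∈ ∂f1(x). Then F(x) − F(x⁺) ≥ ((L1 + μ2)/L1²)·(1/2)‖g1 − g2‖². -/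

import Mathlib

/-!
Since `L/2‖·‖² - f` is convex and, by the lower-curvature subgradient inequality, lies below a
parabola touching it at `x`, it lies above its tangent plane there: this is the descent lemma
`f y ≤ f x + ⟪g, y - x⟫ + L/2‖y - x‖²`. Comparing the lower model at `x` with the upper model at
`y` at a well-chosen point gives the interpolation inequality for `F_{μ,L}`. The decrease then is
the sum of the interpolation inequalities for `f1` at `(x, x⁺)` and `(x⁺, x)`, the subgradient
inequality of `f2` at `x` evaluated at `x⁺`, and `‖g1 - g2 - L1 (x - x⁺)‖² ≥ 0`, with weights
`μ2 L1`, `L1² + μ2 L1`, `2 L1² (L1 - μ1)` and `μ1 L1 + μ1 μ2 + μ2 L1 ≥ 0`.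
-/

open RealInnerProductSpace

variable {H : Type*} [NormedAddCommGroup H] [InnerProductSpace ℝ H]

/-- `f` has lower curvature `μ`, i.e. `f - (μ/2)‖·‖²` is convex. -/
def HasLowerCurvature (μ : ℝ) (f : H → ℝ) : Prop :=
  ConvexOn ℝ Set.univ fun x => f x - μ / 2 * ‖x‖ ^ 2

/-- `f` has upper curvature `L`, i.e. `(L/2)‖·‖² - f` is convex. -/
def HasUpperCurvature (L : ℝ) (f : H → ℝ) : Prop :=
  ConvexOn ℝ Set.univ fun x => L / 2 * ‖x‖ ^ 2 - f x

/-- `g` is a subgradient of `f` (of lower curvature `μ`) at `x`. -/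
def IsSubgradient (μ : ℝ) (f : H → ℝ) (x g : H) : Prop :=
  ∀ y, f y ≥ f x + ⟪g, y - x⟫ + μ / 2 * ‖y - x‖ ^ 2

open Set Filter Topology

theorem norm_smul_sq_real (r : ℝ) (v : H) : ‖r • v‖ ^ 2 = r ^ 2 * ‖v‖ ^ 2 := by
  rw [norm_smul, mul_pow, Real.norm_eq_abs, sq_abs]

theorem norm_sub_smul_sq_real (u v : H) (r : ℝ) :
    ‖u - r • v‖ ^ 2 = ‖u‖ ^ 2 - 2 * r * ⟪u, v⟫ + r ^ 2 * ‖v‖ ^ 2 := by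
  rw [norm_sub_sq_real, real_inner_smul_right, norm_smul_sq_real]
  ring

theorem ConvexOn.add_mul_le_of_le_add_mul_add_mul_sq {ψ : ℝ → ℝ} (hψ : ConvexOn ℝ univ ψ)
    {a c : ℝ} (h : ∀ t, ψ t ≤ ψ 0 + a * t + c * t ^ 2) (s : ℝ) : ψ 0 + a * s ≤ ψ s := by
  have approx : ∀ t : ℝ, 0 < t → ψ 0 + a * s - c * s ^ 2 * t ≤ ψ s := by
    intro t ht
    have hcomb : (1 / (1 + t)) • (-(t * s)) + (t / (1 + t)) • s = 0 := by
      simp only [smul_eq_mul]; field_simp; ring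
    have hconv := hψ.2 (mem_univ (-(t * s))) (mem_univ s)
      (by positivity : (0 : ℝ) ≤ 1 / (1 + t)) (by positivity : (0 : ℝ) ≤ t / (1 + t))
      (by field_simp)
    rw [hcomb, smul_eq_mul, smul_eq_mul] at hconv
    have hpar := h (-(t * s))
    have : t * (ψ 0 + a * s - c * s ^ 2 * t) ≤ t * ψ s := by
      have h1t : 0 < 1 + t := by positivity
      rw [div_mul_eq_mul_div, div_mul_eq_mul_div, ← add_div, le_div_iff₀ h1t] at hconv
      linear_combination hconv + hpar
    exact le_of_mul_le_mul_left this ht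
  have hlim : Tendsto (fun t => ψ 0 + a * s - c * s ^ 2 * t) (𝓝[>] 0) (𝓝 (ψ 0 + a * s)) := by
    refine tendsto_nhdsWithin_of_tendsto_nhds ?_
    exact (by fun_prop : Continuous fun t : ℝ => ψ 0 + a * s - c * s ^ 2 * t).tendsto' 0 _
      (by simp)
  exact le_of_tendsto hlim (eventually_nhdsWithin_of_forall approx)

theorem ConvexOn.add_inner_le_of_le_add_inner_add_mul_sq {φ : H → ℝ} (hφ : ConvexOn ℝ univ φ)
    {x v : H} {c : ℝ} (h : ∀ w, φ w ≤ φ x + ⟪v, w - x⟫ + c * ‖w - x‖ ^ 2) (y : H) :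
    φ x + ⟪v, y - x⟫ ≤ φ y := by
  have hline : ∀ t : ℝ, AffineMap.lineMap x y t - x = t • (y - x) := fun t => by
    rw [AffineMap.lineMap_apply_module']; abel
  have := (hφ.comp_affineMap (AffineMap.lineMap x y)).add_mul_le_of_le_add_mul_add_mul_sq
    (a := ⟪v, y - x⟫) (c := c * ‖y - x‖ ^ 2) (fun t => ?_) 1
  · simpa using this
  · simpa [hline, real_inner_smul_right, norm_smul_sq_real, mul_comm, mul_left_comm, mul_assoc]
      using h (AffineMap.lineMap x y t)

theorem norm_sq_eq_norm_sq_add_inner_add_norm_sub_sq (x w : H) :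
    ‖w‖ ^ 2 = ‖x‖ ^ 2 + 2 * ⟪x, w - x⟫ + ‖w - x‖ ^ 2 := by
  rw [← norm_add_sq_real, add_sub_cancel]

theorem HasUpperCurvature.le_add_inner_add_sq {μ L : ℝ} {f : H → ℝ} (hf : HasUpperCurvature L f)
    {x g : H} (hg : IsSubgradient μ f x g) (y : H) :
    f y ≤ f x + ⟪g, y - x⟫ + L / 2 * ‖y - x‖ ^ 2 := by
  have hupper : ∀ w, L / 2 * ‖w‖ ^ 2 - f w ≤
      (L / 2 * ‖x‖ ^ 2 - f x) + ⟪L • x - g, w - x⟫ + (L - μ) / 2 * ‖w - x‖ ^ 2 := fun w => by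
    rw [inner_sub_left, real_inner_smul_left, norm_sq_eq_norm_sq_add_inner_add_norm_sub_sq x w]
    linear_combination hg w
  have := hf.add_inner_le_of_le_add_inner_add_mul_sq hupper y
  rw [inner_sub_left, real_inner_smul_left,
    norm_sq_eq_norm_sq_add_inner_add_norm_sub_sq x y] at this
  linear_combination this

theorem HasUpperCurvature.norm_sub_sub_smul_sq_le {μ L : ℝ} (hμL : μ < L) {f : H → ℝ}
    (hf : HasUpperCurvature L f) {x y gx gy : H} (hgx : IsSubgradient μ f x gx)
    (hgy : IsSubgradient μ f y gy) :
    ‖gy - gx - μ • (y - x)‖ ^ 2 ≤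
      2 * (L - μ) * (f y - f x - ⟪gx, y - x⟫ - μ / 2 * ‖y - x‖ ^ 2) := by
  set d := gy - gx - μ • (y - x)
  set c := (L - μ)⁻¹
  -- `y - c • d` minimises the gap between the upper model at `y` and the lower model at `x`.
  have hc : (L - μ) * c = 1 := mul_inv_cancel₀ (sub_pos.2 hμL).ne'
  have hd : ‖d‖ ^ 2 = ⟪gy, d⟫ - ⟪gx, d⟫ - μ * ⟪y - x, d⟫ := by
    rw [← real_inner_self_eq_norm_sq]
    conv_lhs => arg 2; unfold d
    simp only [inner_sub_left, real_inner_smul_left]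
  have hlower := hgx (y - c • d)
  have hupper := hf.le_add_inner_add_sq hgy (y - c • d)
  rw [sub_right_comm, inner_sub_right, real_inner_smul_right, norm_sub_smul_sq_real] at hlower
  rw [sub_sub_cancel_left, inner_neg_right, real_inner_smul_right, norm_neg, norm_smul_sq_real]
    at hupper
  linear_combination
    mul_le_mul_of_nonneg_left (hlower.trans hupper) (by linarith : 0 ≤ 2 * (L - μ))
    + 2 * (L - μ) * c * hd + ‖d‖ ^ 2 * ((L - μ) * c - 1) * hc

theorem dca_one_step_p8_general
    (mu1 mu2 L1 : ℝ)
    (h2 : L1 < mu2) (h3 : 0 < L1) (h4 : mu1 < L1)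
    (h6 : mu1 / mu2 + 1 + mu1 / L1 ≥ 0)
    (f1 f2 : H → ℝ)
    (h1up : HasUpperCurvature L1 f1)
    (x xp g1 g2 : H)
    (hg2 : IsSubgradient mu2 f2 x g2) (hg1p : IsSubgradient mu1 f1 xp g2)
    (hg1 : IsSubgradient mu1 f1 x g1) :
    (f1 x - f2 x) - (f1 xp - f2 xp) ≥
      (L1 + mu2) / L1 ^ 2 * ((1 : ℝ) / 2) * ‖g1 - g2‖ ^ 2 := by
  have hmu2 : 0 < mu2 := h3.trans h2
  have hK : 0 ≤ mu1 * L1 + mu1 * mu2 + mu2 * L1 :=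
    calc 0 ≤ mu2 * L1 * (mu1 / mu2 + 1 + mu1 / L1) := mul_nonneg (mul_pos hmu2 h3).le h6
      _ = mu1 * L1 + mu1 * mu2 + mu2 * L1 := by field_simp; ring
  have hflip : ‖g2 - g1 - mu1 • (xp - x)‖ = ‖g1 - g2 - mu1 • (x - xp)‖ := by
    rw [← norm_neg]; congr 1; module
  have hinterp₁ := h1up.norm_sub_sub_smul_sq_le h4 hg1 hg1p
  have hinterp₂ := h1up.norm_sub_sub_smul_sq_le h4 hg1p hg1
  have hsubgrad₂ := hg2 xp
  have hsq := sq_nonneg ‖g1 - g2 - L1 • (x - xp)‖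
  rw [hflip, ← neg_sub x xp, inner_neg_right, norm_neg] at hinterp₁
  rw [← neg_sub x xp, inner_neg_right, norm_neg] at hsubgrad₂
  rw [norm_sub_smul_sq_real] at hinterp₁ hinterp₂ hsq
  have hsplit : ⟪g1, x - xp⟫ = ⟪g1 - g2, x - xp⟫ + ⟪g2, x - xp⟫ := by
    rw [inner_sub_left]; ring
  have hP : 0 < L1 - mu1 := sub_pos.2 h4
  have hs : (L1 - mu1) * ((L1 + mu2) * ‖g1 - g2‖ ^ 2) ≤
      (L1 - mu1) * (2 * L1 ^ 2 * ((f1 x - f2 x) - (f1 xp - f2 xp))) := by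
    linear_combination (mu2 * L1) * hinterp₁ + (L1 ^ 2 + mu2 * L1) * hinterp₂
      + mul_le_mul_of_nonneg_left hsubgrad₂ (by positivity : 0 ≤ 2 * L1 ^ 2 * (L1 - mu1))
      + mul_le_mul_of_nonneg_left hsq hK + 2 * L1 * mu2 * (L1 - mu1) * hsplit
  have hdecrease := le_of_mul_le_mul_left hs hP
  rw [ge_iff_le, show (L1 + mu2) / L1 ^ 2 * ((1 : ℝ) / 2) * ‖g1 - g2‖ ^ 2
    = (L1 + mu2) * ‖g1 - g2‖ ^ 2 / (2 * L1 ^ 2) by ring, div_le_iff₀ (by positivity)]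
  linarith

/-- one-step decrease, regime p8. -/
theorem dca_one_step_p8
    (mu1 mu2 L1 L2 : ℝ)
    (h1 : mu2 < L2) (h2 : L1 < mu2) (h3 : 0 < L1) (h4 : mu1 < L1)
    (h5 : 0 < mu1 + mu2)
    (h6 : mu1 / mu2 + 1 + mu1 / L1 ≥ 0)
    (f1 f2 : H → ℝ)
    (h1lo : HasLowerCurvature mu1 f1) (h1up : HasUpperCurvature L1 f1)
    (h2lo : HasLowerCurvature mu2 f2) (h2up : HasUpperCurvature L2 f2)
    (x xp g1 g2 : H)
    (hg2 : IsSubgradient mu2 f2 x g2) (hg1p : IsSubgradient mu1 f1 xp g2)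
    (hg1 : IsSubgradient mu1 f1 x g1) :
    (f1 x - f2 x) - (f1 xp - f2 xp) ≥
      (L1 + mu2) / L1 ^ 2 * ((1 : ℝ) / 2) * ‖g1 - g2‖ ^ 2 :=
  dca_one_step_p8_general mu1 mu2 L1 h2 h3 h4 h6 f1 f2 h1up x xp g1 g2 hg2 hg1p hg1
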